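/- arXiv:1309.3485 — 3 statements merged into one kernel-verified Lean document; each statement's English description precedes it below -/
import Mathlib

section
/- Let $p$ be an odd prime and $B = \mathbb{Z}_p[x,y,a,b,c]/(xy - p,\ ax + by + abc)$. Then $B \otimes_{\mathbb{Z}_p} \mathbb{F}_p$ has exactly four minimal primes, namely $(y,a)$, $(y, x+bc)$, $(x, y+ac)$, and $(x,b)$. -/
open MvPolynomial

namespace Stmt2Aux

variable {R : Type*} [CommRing R]

lemma sub_aeval_mem {σ : Type*} (g : σ → MvPolynomial σ R) (J : Ideal (MvPolynomial σ R))
    (h : ∀ i, X i - g i ∈ J) (f : MvPolynomial σ R) : f - aeval g f ∈ J := by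
  induction f using MvPolynomial.induction_on with
  | C a => simp [MvPolynomial.algebraMap_eq]
  | add f₁ f₂ h₁ h₂ =>
      have e : (f₁ + f₂) - aeval g (f₁ + f₂) = (f₁ - aeval g f₁) + (f₂ - aeval g f₂) := by
        rw [map_add]; ring
      rw [e]; exact J.add_mem h₁ h₂
  | mul_X f i hf =>
      have e : f * X i - aeval g (f * X i) = f * (X i - g i) + g i * (f - aeval g f) := by
        rw [map_mul, aeval_X]; ring
      rw [e]; exact J.add_mem (J.mul_mem_left _ (h i)) (J.mul_mem_left _ hf)

lemma span_pair_eq_ker {σ : Type*} (g : σ → MvPolynomial σ R) (f₁ f₂ : MvPolynomial σ R)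
    (h : ∀ i, X i - g i ∈ Ideal.span {f₁, f₂}) (h₁ : aeval g f₁ = 0) (h₂ : aeval g f₂ = 0) :
    Ideal.span {f₁, f₂} = RingHom.ker ((aeval g : MvPolynomial σ R →ₐ[R] MvPolynomial σ R) :
      MvPolynomial σ R →+* MvPolynomial σ R) := by
  apply le_antisymm
  · rw [Ideal.span_le]
    rintro f (rfl | rfl)
    · exact h₁
    · simpa using h₂
  · intro f hf
    have hf0 : aeval g f = 0 := hf
    have := sub_aeval_mem g _ h f
    rwa [hf0, sub_zero] at this

lemma span_pair_isPrime [IsDomain R] {σ : Type*} (g : σ → MvPolynomial σ R)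
    (f₁ f₂ : MvPolynomial σ R)
    (h : ∀ i, X i - g i ∈ Ideal.span {f₁, f₂}) (h₁ : aeval g f₁ = 0) (h₂ : aeval g f₂ = 0) :
    (Ideal.span {f₁, f₂}).IsPrime := by
  rw [span_pair_eq_ker g f₁ f₂ h h₁ h₂]
  exact RingHom.ker_isPrime _

lemma not_le_span_pair {k : Type*} [Field k] {σ : Type*} (v : σ → k)
    (f₁ f₂ g₁ g₂ : MvPolynomial σ k) (h1 : eval v g₁ = 0) (h2 : eval v g₂ = 0)
    (hg : eval v f₁ ≠ 0 ∨ eval v f₂ ≠ 0) :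
    ¬ Ideal.span {f₁, f₂} ≤ Ideal.span {g₁, g₂} := by
  intro hle
  have key : ∀ f ∈ Ideal.span ({g₁, g₂} : Set (MvPolynomial σ k)), eval v f = 0 := by
    intro f hf
    rw [Ideal.mem_span_pair] at hf
    obtain ⟨a, b, rfl⟩ := hf
    simp [h1, h2]
  rcases hg with hg | hg
  · exact hg (key _ (hle (Ideal.subset_span (Set.mem_insert _ _))))
  · exact hg (key _ (hle (Ideal.subset_span (Set.mem_insert_of_mem _ rfl))))

section Main

variable (p : ℕ) [Fact p.Prime]

local notation "A" => MvPolynomial (Fin 5) (ZMod p)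

noncomputable def Ip : Ideal A :=
  Ideal.span {X 0 * X 1, X 2 * X 0 + X 3 * X 1 + X 2 * X 3 * X 4}

noncomputable def J1 : Ideal A := Ideal.span {X 1, X 2}
noncomputable def J2 : Ideal A := Ideal.span {X 1, X 0 + X 3 * X 4}
noncomputable def J3 : Ideal A := Ideal.span {X 0, X 1 + X 2 * X 4}
noncomputable def J4 : Ideal A := Ideal.span {X 0, X 3}

lemma mem1 (f₁ f₂ : A) : f₁ ∈ Ideal.span {f₁, f₂} :=
  Ideal.subset_span (Set.mem_insert _ _)

lemma mem2 (f₁ f₂ : A) : f₂ ∈ Ideal.span {f₁, f₂} :=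
  Ideal.subset_span (Set.mem_insert_of_mem _ rfl)

lemma J1_prime : (J1 p).IsPrime := by
  apply span_pair_isPrime ![X 0, 0, 0, X 3, X 4]
  · intro i
    fin_cases i <;> simp <;> first
      | exact mem1 p _ _
      | exact mem2 p _ _
  · simp
  · simp

lemma J2_prime : (J2 p).IsPrime := by
  apply span_pair_isPrime ![-(X 3 * X 4), 0, X 2, X 3, X 4]
  · intro i
    fin_cases i <;> simp [sub_neg_eq_add] <;> first
      | exact mem1 p _ _
      | exact mem2 p _ _
  · simp
  · simp
lemma J3_prime : (J3 p).IsPrime := by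
  apply span_pair_isPrime ![0, -(X 2 * X 4), X 2, X 3, X 4]
  · intro i
    fin_cases i <;> simp [sub_neg_eq_add] <;> first
      | exact mem1 p _ _
      | exact mem2 p _ _
  · simp
  · simp

lemma J4_prime : (J4 p).IsPrime := by
  apply span_pair_isPrime ![0, X 1, X 2, 0, X 4]
  · intro i
    fin_cases i <;> simp <;> first
      | exact mem1 p _ _
      | exact mem2 p _ _
  · simp
  · simp

lemma I_le_J1 : Ip p ≤ J1 p := by
  rw [Ip, Ideal.span_le]
  rintro f (rfl | rfl) <;> rw [SetLike.mem_coe, J1, Ideal.mem_span_pair]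
  · exact ⟨X 0, 0, by ring⟩
  · exact ⟨X 3, X 0 + X 3 * X 4, by ring⟩

lemma I_le_J2 : Ip p ≤ J2 p := by
  rw [Ip, Ideal.span_le]
  rintro f (rfl | rfl) <;> rw [SetLike.mem_coe, J2, Ideal.mem_span_pair]
  · exact ⟨X 0, 0, by ring⟩
  · exact ⟨X 3, X 2, by ring⟩

lemma I_le_J3 : Ip p ≤ J3 p := by
  rw [Ip, Ideal.span_le]
  rintro f (rfl | rfl) <;> rw [SetLike.mem_coe, J3, Ideal.mem_span_pair]
  · exact ⟨X 1, 0, by ring⟩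
  · exact ⟨X 2, X 3, by ring⟩

lemma I_le_J4 : Ip p ≤ J4 p := by
  rw [Ip, Ideal.span_le]
  rintro f (rfl | rfl) <;> rw [SetLike.mem_coe, J4, Ideal.mem_span_pair]
  · exact ⟨X 1, 0, by ring⟩
  · exact ⟨X 2, X 1 + X 2 * X 4, by ring⟩

lemma cover (P : Ideal A) (hP : P.IsPrime) (hIP : Ip p ≤ P) :
    J1 p ≤ P ∨ J2 p ≤ P ∨ J3 p ≤ P ∨ J4 p ≤ P := by
  have hxy : X 0 * X 1 ∈ P := hIP (mem1 p _ _)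
  have h2 : X 2 * X 0 + X 3 * X 1 + X 2 * X 3 * X 4 ∈ P := hIP (mem2 p _ _)
  rcases hP.mem_or_mem hxy with hx | hy
  · -- X 0 ∈ P
    have h3 : X 3 * (X 1 + X 2 * X 4) ∈ P := by
      have := P.sub_mem h2 (P.mul_mem_left (X 2) hx)
      have e : X 2 * X 0 + X 3 * X 1 + X 2 * X 3 * X 4 - X 2 * X 0
          = (X 3 * (X 1 + X 2 * X 4) : A) := by ring
      rwa [e] at this
    rcases hP.mem_or_mem h3 with hb | hyac
    · right; right; right
      rw [J4, Ideal.span_le]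
      rintro f (rfl | rfl)
      exacts [hx, hb]
    · right; right; left
      rw [J3, Ideal.span_le]
      rintro f (rfl | rfl)
      exacts [hx, hyac]
  · -- X 1 ∈ P
    have h3 : X 2 * (X 0 + X 3 * X 4) ∈ P := by
      have := P.sub_mem h2 (P.mul_mem_left (X 3) hy)
      have e : X 2 * X 0 + X 3 * X 1 + X 2 * X 3 * X 4 - X 3 * X 1
          = (X 2 * (X 0 + X 3 * X 4) : A) := by ring
      rwa [e] at this
    rcases hP.mem_or_mem h3 with ha | hxbc
    · left
      rw [J1, Ideal.span_le]
      rintro f (rfl | rfl)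
      exacts [hy, ha]
    · right; left
      rw [J2, Ideal.span_le]
      rintro f (rfl | rfl)
      exacts [hy, hxbc]

lemma not_le_12 : ¬ J1 p ≤ J2 p := by
  rw [J1, J2]
  apply not_le_span_pair ![0, 0, 1, 0, 0] <;> simp

lemma not_le_13 : ¬ J1 p ≤ J3 p := by
  rw [J1, J3]
  apply not_le_span_pair ![0, 1, 1, 0, -1] <;> simp

lemma not_le_14 : ¬ J1 p ≤ J4 p := by
  rw [J1, J4]
  apply not_le_span_pair ![0, 1, 0, 0, 0] <;> simp

lemma not_le_21 : ¬ J2 p ≤ J1 p := by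
  rw [J2, J1]
  apply not_le_span_pair ![1, 0, 0, 0, 0] <;> simp

lemma not_le_23 : ¬ J2 p ≤ J3 p := by
  rw [J2, J3]
  apply not_le_span_pair ![0, 1, 1, 0, -1] <;> simp

lemma not_le_24 : ¬ J2 p ≤ J4 p := by
  rw [J2, J4]
  apply not_le_span_pair ![0, 1, 0, 0, 0] <;> simp

lemma not_le_31 : ¬ J3 p ≤ J1 p := by
  rw [J3, J1]
  apply not_le_span_pair ![1, 0, 0, 0, 0] <;> simp

lemma not_le_32 : ¬ J3 p ≤ J2 p := by
  rw [J3, J2]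
  apply not_le_span_pair ![1, 0, 0, 1, -1] <;> simp

lemma not_le_34 : ¬ J3 p ≤ J4 p := by
  rw [J3, J4]
  apply not_le_span_pair ![0, 1, 0, 0, 0] <;> simp

lemma not_le_41 : ¬ J4 p ≤ J1 p := by
  rw [J4, J1]
  apply not_le_span_pair ![1, 0, 0, 0, 0] <;> simp

lemma not_le_42 : ¬ J4 p ≤ J2 p := by
  rw [J4, J2]
  apply not_le_span_pair ![0, 0, 0, 1, 0] <;> simp

lemma not_le_43 : ¬ J4 p ≤ J3 p := by
  rw [J4, J3]
  apply not_le_span_pair ![0, 0, 0, 1, 0] <;> simp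

lemma minimalPrimes_Ip :
    (Ip p).minimalPrimes = {J1 p, J2 p, J3 p, J4 p} := by
  ext P
  constructor
  · rintro ⟨⟨hP, hIP⟩, hmin⟩
    rcases cover p P hP hIP with h | h | h | h
    · have := hmin ⟨J1_prime p, I_le_J1 p⟩ h
      exact Or.inl (le_antisymm this h)
    · have := hmin ⟨J2_prime p, I_le_J2 p⟩ h
      exact Or.inr (Or.inl (le_antisymm this h))
    · have := hmin ⟨J3_prime p, I_le_J3 p⟩ h
      exact Or.inr (Or.inr (Or.inl (le_antisymm this h)))
    · have := hmin ⟨J4_prime p, I_le_J4 p⟩ h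
      exact Or.inr (Or.inr (Or.inr (le_antisymm this h)))
  · rintro (rfl | rfl | rfl | rfl)
    · refine ⟨⟨J1_prime p, I_le_J1 p⟩, ?_⟩
      intro Q hQ hQle
      rcases cover p Q hQ.1 hQ.2 with h | h | h | h
      · exact h
      · exact absurd (h.trans hQle) (not_le_21 p)
      · exact absurd (h.trans hQle) (not_le_31 p)
      · exact absurd (h.trans hQle) (not_le_41 p)
    · refine ⟨⟨J2_prime p, I_le_J2 p⟩, ?_⟩
      intro Q hQ hQle
      rcases cover p Q hQ.1 hQ.2 with h | h | h | h
      · exact absurd (h.trans hQle) (not_le_12 p)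
      · exact h
      · exact absurd (h.trans hQle) (not_le_32 p)
      · exact absurd (h.trans hQle) (not_le_42 p)
    · refine ⟨⟨J3_prime p, I_le_J3 p⟩, ?_⟩
      intro Q hQ hQle
      rcases cover p Q hQ.1 hQ.2 with h | h | h | h
      · exact absurd (h.trans hQle) (not_le_13 p)
      · exact absurd (h.trans hQle) (not_le_23 p)
      · exact h
      · exact absurd (h.trans hQle) (not_le_43 p)
    · refine ⟨⟨J4_prime p, I_le_J4 p⟩, ?_⟩
      intro Q hQ hQle
      rcases cover p Q hQ.1 hQ.2 with h | h | h | h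
      · exact absurd (h.trans hQle) (not_le_14 p)
      · exact absurd (h.trans hQle) (not_le_24 p)
      · exact absurd (h.trans hQle) (not_le_34 p)
      · exact h

lemma main :
    minimalPrimes (A ⧸ Ip p) =
      {Ideal.span {Ideal.Quotient.mk (Ip p) (X 1), Ideal.Quotient.mk (Ip p) (X 2)},
       Ideal.span {Ideal.Quotient.mk (Ip p) (X 1),
         Ideal.Quotient.mk (Ip p) (X 0 + X 3 * X 4)},
       Ideal.span {Ideal.Quotient.mk (Ip p) (X 0),
         Ideal.Quotient.mk (Ip p) (X 1 + X 2 * X 4)},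
       Ideal.span {Ideal.Quotient.mk (Ip p) (X 0), Ideal.Quotient.mk (Ip p) (X 3)}} := by
  have hsurj : Function.Surjective (Ideal.Quotient.mk (Ip p)) := Ideal.Quotient.mk_surjective
  have h1 : minimalPrimes (A ⧸ Ip p) =
      Ideal.map (Ideal.Quotient.mk (Ip p)) '' (Ideal.comap (Ideal.Quotient.mk (Ip p)) ''
        minimalPrimes (A ⧸ Ip p)) := by
    rw [Set.image_image]
    have : ∀ P ∈ minimalPrimes (A ⧸ Ip p),
        Ideal.map (Ideal.Quotient.mk (Ip p)) (Ideal.comap (Ideal.Quotient.mk (Ip p)) P) = P :=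
      fun P _ => Ideal.map_comap_of_surjective _ hsurj P
    rw [Set.image_congr this, Set.image_id']
  rw [h1, ← Ideal.minimalPrimes_eq_comap, minimalPrimes_Ip]
  have hmap : ∀ f g : A, Ideal.map (Ideal.Quotient.mk (Ip p)) (Ideal.span {f, g}) =
      Ideal.span {Ideal.Quotient.mk (Ip p) f, Ideal.Quotient.mk (Ip p) g} := by
    intro f g
    rw [Ideal.map_span, Set.image_insert_eq, Set.image_singleton]
  simp only [Set.image_insert_eq, Set.image_singleton, J1, J2, J3, J4, hmap]

end Main

end Stmt2Aux

/-- The special fiber of de Jong's chart `U₀` of the Siegel local model: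
`B ⊗ 𝔽_p = 𝔽_p[x,y,a,b,c]/(xy, ax+by+abc)` has exactly the four minimal primes
`(y,a)`, `(y, x+bc)`, `(x, y+ac)`, `(x,b)`.  Variables: `x = X 0`, `y = X 1`,
`a = X 2`, `b = X 3`, `c = X 4`. -/
theorem stmt2 (p : ℕ) [Fact p.Prime] (hp : Odd p) :
    letI I : Ideal (MvPolynomial (Fin 5) (ZMod p)) :=
      Ideal.span {X 0 * X 1, X 2 * X 0 + X 3 * X 1 + X 2 * X 3 * X 4}
    letI R := MvPolynomial (Fin 5) (ZMod p) ⧸ I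
    letI π : MvPolynomial (Fin 5) (ZMod p) →+* R := Ideal.Quotient.mk I
    minimalPrimes R =
      {Ideal.span {π (X 1), π (X 2)},
       Ideal.span {π (X 1), π (X 0 + X 3 * X 4)},
       Ideal.span {π (X 0), π (X 1 + X 2 * X 4)},
       Ideal.span {π (X 0), π (X 3)}} := by
  exact Stmt2Aux.main p
end

section
/- In the ring $B = \mathbb{Z}_p[x,y,a,b,c]/(xy - p,\ ax+by+abc)$, one has the identity that the ideal $(x, bc)$ equals the intersection $(x,b) \cap (x, y+ac, c)$ after passing to radicals; equivalently, $V(x, bc) = V(x,b) \cup V(x, c, y+ac)$ in $\mathrm{Spec}(B/pB)$. -/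
open MvPolynomial

/-- In `B/pB = 𝔽_p[x,y,a,b,c]/(xy, ax+by+abc)` one has
`V(x, bc) = V(x,b) ∪ V(x, c, y+ac)`, i.e. the radicals satisfy
`√(x, bc) = √(x,b) ∩ √(x, c, y+ac)`.  Variables: `x = X 0`, `y = X 1`, `a = X 2`,
`b = X 3`, `c = X 4`. -/
theorem stmt11 (p : ℕ) [Fact p.Prime] (hp : Odd p) :
    letI I : Ideal (MvPolynomial (Fin 5) (ZMod p)) :=
      Ideal.span {X 0 * X 1, X 2 * X 0 + X 3 * X 1 + X 2 * X 3 * X 4}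
    letI R := MvPolynomial (Fin 5) (ZMod p) ⧸ I
    letI π : MvPolynomial (Fin 5) (ZMod p) →+* R := Ideal.Quotient.mk I
    (Ideal.span {π (X 0), π (X 3 * X 4)}).radical =
      (Ideal.span {π (X 0), π (X 3)}).radical ⊓
        (Ideal.span {π (X 0), π (X 4), π (X 1 + X 2 * X 4)}).radical := by
  set I : Ideal (MvPolynomial (Fin 5) (ZMod p)) :=
    Ideal.span {X 0 * X 1, X 2 * X 0 + X 3 * X 1 + X 2 * X 3 * X 4} with hI
  set π : MvPolynomial (Fin 5) (ZMod p) →+* MvPolynomial (Fin 5) (ZMod p) ⧸ I :=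
    Ideal.Quotient.mk I with hπ
  -- key relation: b(y+ac) = -ax in the quotient
  have key : π (X 3) * π (X 1 + X 2 * X 4) = -(π (X 2) * π (X 0)) := by
    rw [hπ, ← map_mul, ← map_mul, ← map_neg, Ideal.Quotient.eq]
    have h : (X 3 * (X 1 + X 2 * X 4) - -(X 2 * X 0) : MvPolynomial (Fin 5) (ZMod p))
        = X 2 * X 0 + X 3 * X 1 + X 2 * X 3 * X 4 := by ring
    rw [h]
    exact Ideal.subset_span (by simp)
  have hxmem : π (X 0) ∈ Ideal.span {π (X 0), π (X 3 * X 4)} :=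
    Ideal.subset_span (by simp)
  apply le_antisymm
  · apply le_inf
    · apply Ideal.radical_mono
      rw [Ideal.span_le]
      rintro z hz
      simp only [Set.mem_insert_iff, Set.mem_singleton_iff] at hz
      rcases hz with rfl | rfl
      · exact Ideal.subset_span (by simp)
      · rw [map_mul]
        exact Ideal.mul_mem_right _ _ (Ideal.subset_span (by simp))
    · apply Ideal.radical_mono
      rw [Ideal.span_le]
      rintro z hz
      simp only [Set.mem_insert_iff, Set.mem_singleton_iff] at hz
      rcases hz with rfl | rfl
      · exact Ideal.subset_span (by simp)
      · rw [map_mul]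
        exact Ideal.mul_mem_left _ _ (Ideal.subset_span (by simp))
  · rw [← Ideal.radical_mul]
    apply Ideal.radical_mono
    rw [Ideal.span_mul_span', Ideal.span_le]
    rintro _ ⟨u, hu, v, hv, rfl⟩
    simp only [Set.mem_insert_iff, Set.mem_singleton_iff] at hu hv
    rcases hu with rfl | rfl <;> rcases hv with rfl | rfl | rfl
    · exact Ideal.mul_mem_right _ _ hxmem
    · exact Ideal.mul_mem_right _ _ hxmem
    · exact Ideal.mul_mem_right _ _ hxmem
    · exact Ideal.mul_mem_left _ _ hxmem
    · show π (X 3) * π (X 4) ∈ _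
      rw [← map_mul]; exact Ideal.subset_span (Set.mem_insert_of_mem _ rfl)
    · show π (X 3) * π (X 1 + X 2 * X 4) ∈ _
      rw [key]
      exact neg_mem (Ideal.mul_mem_left _ _ hxmem)
end

section
/- Let $p$ be an odd prime and consider the graded ring $S = B[\tilde x, \tilde b]/(a\tilde x + \tilde b y + a \tilde b c,\ x \tilde b - \tilde x b)$ over $B = \mathbb{Z}_p[x,y,a,b,c]/(xy-p, ax+by+abc)$, with $\tilde x, \tilde b$ of degree 1. Then $\mathrm{Proj}_B(S)$ is isomorphic to the blowup of $\mathrm{Spec}(B)$ along the ideal $(x,b)$. -/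
/-!
The map `B[x̃, b̃] → B[T]`, `x̃ ↦ xT`, `b̃ ↦ bT`, is graded, so its kernel is spanned by the
homogeneous `F` with `F(x, b) = 0`. Write such an `F` of degree `n + 1` as `c x̃ⁿ⁺¹ + b̃ F₁`. Then
`c xⁿ⁺¹ ∈ (b)`, and since `x` is a nonzerodivisor modulo `(a, b)`, `c = Ua + Vb`. Subtracting
`U x̃ⁿ (ax̃ + (y + ac) b̃) - V x̃ⁿ (x b̃ - b x̃)` leaves `b̃ F₂` with `F₂` of degree `n`, and
`b F₂(x, b) = 0` by `ax + b(y + ac) = 0`; as `b` is a nonzerodivisor, induction applies to `F₂`.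

Both regularity statements in `B` are checked in the polynomial ring by setting variables to
zero: modulo `b` the relation `ax + by + abc` becomes `ax`, modulo `(a, b)` it vanishes, and
`xy - p` is coprime to the variables because its constant term `-p` is nonzero.
-/

open MvPolynomial
open scoped nonZeroDivisors

theorem Ideal.mem_of_mul_pow_mem {R : Type*} [Semiring R] {I : Ideal R} {x : R}
    (hx : ∀ z, z * x ∈ I → z ∈ I) {z : R} (n : ℕ) (h : z * x ^ n ∈ I) : z ∈ I := by
  induction n with
  | zero => simpa using h
  | succ n ih => exact ih (hx _ (by rwa [pow_succ, ← mul_assoc] at h))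

namespace MvPolynomial

variable {σ R : Type*}

section CommSemiring

variable [CommSemiring R]

theorem aeval_C_mul_X_of_isHomogeneous (v : σ → R) {n : ℕ} {F : MvPolynomial σ R}
    (hF : F.IsHomogeneous n) :
    aeval (fun i => Polynomial.C (v i) * Polynomial.X) F =
      Polynomial.C (eval v F) * Polynomial.X ^ n := by
  conv_lhs => rw [F.as_sum]
  conv_rhs => rw [F.as_sum]
  rw [map_sum, map_sum, map_sum, Finset.sum_mul]
  refine Finset.sum_congr rfl fun m hm => ?_
  rw [aeval_monomial, eval_monomial, hF.degree_eq_sum_deg_support hm]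
  simp only [Finsupp.prod, mul_pow, Finset.prod_mul_distrib, Finset.prod_pow_eq_pow_sum,
    Polynomial.algebraMap_eq, map_mul, map_prod, map_pow, mul_assoc]

theorem coeff_aeval_C_mul_X (v : σ → R) (F : MvPolynomial σ R) (n : ℕ) :
    (aeval (fun i => Polynomial.C (v i) * Polynomial.X) F).coeff n =
      eval v (homogeneousComponent n F) := by
  conv_lhs => rw [← sum_homogeneousComponent F]
  simp only [map_sum, Polynomial.finsetSum_coeff,
    aeval_C_mul_X_of_isHomogeneous v (homogeneousComponent_isHomogeneous _ F),
    Polynomial.coeff_C_mul_X_pow, Finset.sum_ite_eq, Finset.mem_range]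
  split_ifs with h
  · rfl
  · rw [homogeneousComponent_eq_zero _ _ (by omega), map_zero]

theorem vecCons_C_mul_X (x b : R) :
    ![Polynomial.C x * Polynomial.X, Polynomial.C b * Polynomial.X] =
      fun i => Polynomial.C (![x, b] i) * Polynomial.X := by
  ext1 i
  fin_cases i <;> rfl

end CommSemiring

variable [CommRing R]

theorem range_aeval_C_mul_X {ι : Type*} (v : ι → R) :
    (aeval fun i => Polynomial.C (v i) * Polynomial.X :
      MvPolynomial ι R →ₐ[R] Polynomial R).range = reesAlgebra (Ideal.span (Set.range v)) := by
  rw [← adjoin_monomial_eq_reesAlgebra, Submodule.map_span, Algebra.adjoin_span,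
    ← Set.range_comp, Algebra.adjoin_range_eq_range_aeval]
  simp [Function.comp_def, Polynomial.C_mul_X_eq_monomial]

theorem range_aeval_C_mul_X_pair (x b : R) :
    (aeval ![Polynomial.C x * Polynomial.X, Polynomial.C b * Polynomial.X] :
      MvPolynomial (Fin 2) R →ₐ[R] Polynomial R).range = reesAlgebra (Ideal.span {x, b}) := by
  rw [vecCons_C_mul_X, range_aeval_C_mul_X, Matrix.range_cons_cons_empty]

section Substitution

variable [DecidableEq σ]

noncomputable def killX (i : σ) : MvPolynomial σ R →ₐ[R] MvPolynomial σ R :=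
  aeval (Function.update X i 0)

@[simp]
theorem killX_X (i j : σ) : killX i (X j : MvPolynomial σ R) = if j = i then 0 else X j := by
  simp [killX, Function.update_apply]

theorem X_dvd_sub_killX (i : σ) (h : MvPolynomial σ R) : X i ∣ h - killX i h := by
  rw [← Ideal.mem_span_singleton, ← Ideal.Quotient.eq]
  have hcomp : (Ideal.Quotient.mkₐ R (Ideal.span {X i})).comp (killX i) =
      Ideal.Quotient.mkₐ R (Ideal.span {(X i : MvPolynomial σ R)}) := by
    ext j
    by_cases hj : j = i
    · subst hj
      simp
    · simp [hj]
  exact (AlgHom.congr_fun hcomp h).symm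

end Substitution

theorem dvd_of_dvd_mul_X [IsDomain R] {i : σ} {f w : MvPolynomial σ R} (hf : ¬X i ∣ f)
    (h : f ∣ w * X i) : f ∣ w := by
  obtain ⟨γ, hγ⟩ := h
  obtain ⟨γ', rfl⟩ := (X_prime.dvd_or_dvd ⟨w, by rw [← hγ, mul_comm]⟩).resolve_left hf
  exact ⟨γ', mul_right_cancel₀ (X_ne_zero i) (by rw [hγ]; ring)⟩

theorem exists_eq_C_mul_X_pow_add_X_mul {n : ℕ} {F : MvPolynomial (Fin 2) R}
    (hF : F.IsHomogeneous (n + 1)) :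
    ∃ c F₁, F₁.IsHomogeneous n ∧ F = C c * X 0 ^ (n + 1) + X 1 * F₁ := by
  set c := coeff (Finsupp.single 0 (n + 1)) F
  have hG := hF.sub (isHomogeneous_C_mul_X_pow c 0 (n + 1))
  obtain ⟨F₁, hF₁⟩ : X 1 ∣ F - C c * X 0 ^ (n + 1) := by
    rw [← Ideal.mem_span_singleton, ← Set.image_singleton, mem_ideal_span_X_image]
    refine fun m hm => ⟨1, rfl, fun hm1 => mem_support_iff.mp hm ?_⟩
    have hm0 : m = Finsupp.single 0 (n + 1) := by
      have hdeg := hG.degree_eq_sum_deg_support hm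
      rw [← Finsupp.degree_apply, Finsupp.degree_eq_sum, Fin.sum_univ_two] at hdeg
      ext i
      fin_cases i <;> simp [hm1] at hdeg ⊢; omega
    simp [hm0, c, X_pow_eq_monomial, C_mul_monomial]
  refine ⟨c, F₁, fun m hm => ?_, by linear_combination hF₁⟩
  have hdeg := hG (by rwa [hF₁, coeff_X_mul])
  simp [Finsupp.weight_single] at hdeg
  omega

theorem mem_span_of_isHomogeneous_of_eval_eq_zero {x b a d : R} (hb : b ∈ R⁰)
    (hx : ∀ z, z * x ∈ Ideal.span {a, b} → z ∈ Ideal.span {a, b}) (hrel : a * x + b * d = 0)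
    {n : ℕ} {F : MvPolynomial (Fin 2) R} (hF : F.IsHomogeneous n) (hF0 : eval ![x, b] F = 0) :
    F ∈ Ideal.span {C a * X 0 + C d * X 1, C x * X 1 - C b * X 0} := by
  induction n generalizing F with
  | zero =>
    rw [← totalDegree_zero_iff_isHomogeneous, totalDegree_eq_zero_iff_eq_C] at hF
    rw [hF, eval_C] at hF0
    rw [hF, hF0, C_0]
    exact zero_mem _
  | succ n ih =>
    obtain ⟨c, F₁, hF₁, rfl⟩ := exists_eq_C_mul_X_pow_add_X_mul hF
    have hsum : c * x ^ (n + 1) + b * eval ![x, b] F₁ = 0 := by simpa using hF0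
    obtain ⟨U, V, hUV⟩ : ∃ U V, U * a + V * b = c := by
      refine Ideal.mem_span_pair.mp (Ideal.mem_of_mul_pow_mem hx (n + 1) ?_)
      rw [eq_neg_of_add_eq_zero_left hsum]
      exact neg_mem (Ideal.mem_span_pair.mpr ⟨0, eval ![x, b] F₁, by ring⟩)
    set F₂ := F₁ + C (V * x - U * d) * X 0 ^ n
    have hF₂ : eval ![x, b] F₂ = 0 := by
      refine (mul_left_mem_nonZeroDivisors_eq_zero_iff hb).mp ?_
      simp only [F₂, map_add, map_mul, map_pow, eval_C, eval_X, Matrix.cons_val_zero]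
      linear_combination hsum - U * x ^ n * hrel + x ^ (n + 1) * hUV
    have hdecomp : C c * X 0 ^ (n + 1) + X 1 * F₁ = X 1 * F₂ +
        C U * X 0 ^ n * (C a * X 0 + C d * X 1) - C V * X 0 ^ n * (C x * X 1 - C b * X 0) := by
      rw [← hUV]
      simp only [F₂, map_add, map_sub, map_mul]
      ring
    rw [hdecomp]
    refine sub_mem (add_mem (Ideal.mul_mem_left _ _ ?_) (Ideal.mul_mem_left _ _ ?_))
      (Ideal.mul_mem_left _ _ ?_)
    · exact ih (hF₁.add (isHomogeneous_C_mul_X_pow _ _ _)) hF₂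
    all_goals exact Ideal.subset_span (by simp)

theorem ker_aeval_C_mul_X_pair {x b a d : R} (hb : b ∈ R⁰)
    (hx : ∀ z, z * x ∈ Ideal.span {a, b} → z ∈ Ideal.span {a, b}) (hrel : a * x + b * d = 0) :
    RingHom.ker (aeval ![Polynomial.C x * Polynomial.X, Polynomial.C b * Polynomial.X] :
      MvPolynomial (Fin 2) R →ₐ[R] Polynomial R) =
      Ideal.span {C a * X 0 + C d * X 1, C x * X 1 - C b * X 0} := by
  apply le_antisymm
  · intro F hF
    rw [← sum_homogeneousComponent F]
    refine Ideal.sum_mem _ fun n _ => mem_span_of_isHomogeneous_of_eval_eq_zero hb hx hrel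
      (homogeneousComponent_isHomogeneous n F) ?_
    rw [← coeff_aeval_C_mul_X, ← vecCons_C_mul_X]
    simp [RingHom.mem_ker.mp hF]
  · rw [Ideal.span_le]
    have hrelX := congrArg (fun r => Polynomial.C r * Polynomial.X) hrel
    simp only [map_add, map_mul, map_zero, zero_mul] at hrelX
    rintro _ (rfl | rfl) <;>
      simp only [SetLike.mem_coe, RingHom.mem_ker, map_add, map_sub, map_mul, algHom_C,
        Polynomial.algebraMap_eq, aeval_X, Matrix.cons_val_zero, Matrix.cons_val_one,
        Matrix.cons_val_fin_one]
    · linear_combination hrelX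
    · ring

end MvPolynomial

namespace DeJongChart

variable (p : ℕ) [Fact p.Prime]

-- The coordinates `x, y, a, b, c` of the chart are `X 0, …, X 4`.
noncomputable def f : MvPolynomial (Fin 5) ℤ_[p] := X 0 * X 1 - C (p : ℤ_[p])

noncomputable def g : MvPolynomial (Fin 5) ℤ_[p] := X 2 * X 0 + X 3 * X 1 + X 2 * X 3 * X 4

noncomputable abbrev I : Ideal (MvPolynomial (Fin 5) ℤ_[p]) := Ideal.span {f p, g p}

theorem not_X_dvd_f (i : Fin 5) : ¬X i ∣ f p := by
  rintro ⟨q, hq⟩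
  exact (Fact.out : p.Prime).ne_zero (by simpa [f] using congr(constantCoeff $hq))

theorem killX_two_f : killX 2 (f p) = f p := by simp [f]

theorem killX_three_f : killX 3 (f p) = f p := by simp [f]

theorem killX_two_g : killX 2 (g p) = X 3 * X 1 := by simp [g]

theorem killX_three_g : killX 3 (g p) = X 2 * X 0 := by simp [g]

variable {p}

theorem mem_I_of_X3_mul_mem {u : MvPolynomial (Fin 5) ℤ_[p]} (h : X 3 * u ∈ I p) : u ∈ I p := by
  obtain ⟨α, β, hαβ⟩ := Ideal.mem_span_pair.mp h
  have hβ : f p ∣ killX 3 β := by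
    have h3 := congr(killX 3 $hαβ)
    simp only [map_add, map_mul, killX_three_f, killX_three_g, killX_X, if_pos, zero_mul] at h3
    refine dvd_of_dvd_mul_X (not_X_dvd_f p 2) (dvd_of_dvd_mul_X (not_X_dvd_f p 0) ?_)
    exact ⟨-killX 3 α, by linear_combination h3⟩
  obtain ⟨δ, hδ⟩ := hβ
  obtain ⟨β₃, hβ₃⟩ := X_dvd_sub_killX 3 β
  have hX3 : X 3 ∣ f p * (α + δ * g p) :=
    ⟨u - β₃ * g p, by linear_combination hαβ - g p * hδ - g p * hβ₃⟩
  obtain ⟨ε, hε⟩ := (X_prime.dvd_or_dvd hX3).resolve_left (not_X_dvd_f p 3)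
  exact Ideal.mem_span_pair.mpr ⟨ε, β₃, mul_left_cancel₀ (X_ne_zero 3)
    (by linear_combination hαβ - g p * hδ - g p * hβ₃ - f p * hε)⟩

theorem mem_sup_I_of_mul_X0_mem {u : MvPolynomial (Fin 5) ℤ_[p]}
    (h : u * X 0 ∈ Ideal.span {X 2, X 3} ⊔ I p) : u ∈ Ideal.span {X 2, X 3} ⊔ I p := by
  set κ := (killX 3).comp (killX 2 : MvPolynomial (Fin 5) ℤ_[p] →ₐ[ℤ_[p]] _)
  have hκ : Ideal.span {X 2, X 3} ⊔ I p ≤ (Ideal.span {f p}).comap κ := by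
    refine sup_le (Ideal.span_le.mpr ?_) (Ideal.span_le.mpr ?_) <;>
      simp [Set.insert_subset_iff, κ, killX_two_f, killX_three_f, killX_two_g]
  obtain ⟨γ, hγ⟩ : f p ∣ κ u := dvd_of_dvd_mul_X (not_X_dvd_f p 0)
    (by simpa [Ideal.mem_span_singleton, κ] using hκ h)
  obtain ⟨q₂, hq₂⟩ := X_dvd_sub_killX 2 u
  obtain ⟨q₃, hq₃⟩ := X_dvd_sub_killX 3 (killX 2 u)
  have hu : u = X 2 * q₂ + X 3 * q₃ + f p * γ := by
    rw [← hγ]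
    simp only [κ, AlgHom.comp_apply]
    linear_combination hq₂ + hq₃
  rw [hu]
  exact add_mem (Ideal.mem_sup_left (Ideal.mem_span_pair.mpr ⟨q₂, q₃, by ring⟩))
    (Ideal.mem_sup_right (Ideal.mem_span_pair.mpr ⟨γ, 0, by ring⟩))

local notation "π" => Ideal.Quotient.mk (I p)

variable (p) in
theorem X3_mem_nonZeroDivisors : π (X 3) ∈ (MvPolynomial (Fin 5) ℤ_[p] ⧸ I p)⁰ := by
  rw [mem_nonZeroDivisors_iff_right]
  intro z hz
  obtain ⟨u, rfl⟩ := Ideal.Quotient.mk_surjective z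
  rw [← map_mul, Ideal.Quotient.eq_zero_iff_mem, mul_comm] at hz
  exact Ideal.Quotient.eq_zero_iff_mem.mpr (mem_I_of_X3_mul_mem hz)

theorem mem_span_X2_X3_of_mul_X0_mem (z : MvPolynomial (Fin 5) ℤ_[p] ⧸ I p)
    (h : z * π (X 0) ∈ Ideal.span {π (X 2), π (X 3)}) : z ∈ Ideal.span {π (X 2), π (X 3)} := by
  have hmem (u) : π u ∈ Ideal.span {π (X 2), π (X 3)} ↔ u ∈ Ideal.span {X 2, X 3} ⊔ I p := by
    rw [← Set.image_pair, ← Ideal.map_span, ← Ideal.mem_comap,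
      Ideal.comap_map_of_surjective' _ Ideal.Quotient.mk_surjective, Ideal.mk_ker]
  obtain ⟨u, rfl⟩ := Ideal.Quotient.mk_surjective z
  rw [← map_mul, hmem] at h
  exact (hmem u).mpr (mem_sup_I_of_mul_X0_mem h)

variable (p) in
theorem X2_mul_X0_add_X3_mul_eq_zero :
    π (X 2) * π (X 0) + π (X 3) * (π (X 1) + π (X 2) * π (X 4)) = 0 := by
  have hg : π (g p) = 0 := Ideal.Quotient.eq_zero_iff_mem.mpr (Ideal.subset_span (by simp))
  simp only [g, map_add, map_mul] at hg
  linear_combination hg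

theorem ker_aeval_eq :
    RingHom.ker (aeval ![Polynomial.C (π (X 0)) * Polynomial.X,
        Polynomial.C (π (X 3)) * Polynomial.X] :
      MvPolynomial (Fin 2) (MvPolynomial (Fin 5) ℤ_[p] ⧸ I p) →ₐ[_] _) =
      Ideal.span {C (π (X 2)) * X 0 + X 1 * C (π (X 1)) + C (π (X 2)) * X 1 * C (π (X 4)),
        C (π (X 0)) * X 1 - X 0 * C (π (X 3))} := by
  rw [ker_aeval_C_mul_X_pair (X3_mem_nonZeroDivisors p) mem_span_X2_X3_of_mul_X0_mem
    (X2_mul_X0_add_X3_mul_eq_zero p)]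
  congr 2
  · rw [map_add, map_mul]
    ring
  · exact congrArg _ (by ring)

end DeJongChart

open DeJongChart in
theorem stmt19_general (p : ℕ) [Fact p.Prime] :
    letI I : Ideal (MvPolynomial (Fin 5) ℤ_[p]) :=
      Ideal.span {X 0 * X 1 - C (p : ℤ_[p]),
        X 2 * X 0 + X 3 * X 1 + X 2 * X 3 * X 4}
    letI B := MvPolynomial (Fin 5) ℤ_[p] ⧸ I
    letI π : MvPolynomial (Fin 5) ℤ_[p] →+* B := Ideal.Quotient.mk I
    letI φ : MvPolynomial (Fin 2) B →ₐ[B] Polynomial B :=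
      MvPolynomial.aeval
        ![Polynomial.C (π (X 0)) * Polynomial.X,
          Polynomial.C (π (X 3)) * Polynomial.X]
    RingHom.ker (φ : MvPolynomial (Fin 2) B →+* Polynomial B) =
      Ideal.span
        {C (π (X 2)) * X 0 + X 1 * C (π (X 1)) + C (π (X 2)) * X 1 * C (π (X 4)),
         C (π (X 0)) * X 1 - X 0 * C (π (X 3))} ∧
    φ.range = reesAlgebra (Ideal.span {π (X 0), π (X 3)}) :=
  ⟨ker_aeval_eq, range_aeval_C_mul_X_pair _ _⟩

/-- `Proj` of the graded ring `S = B[x̃,b̃]/(ax̃ + b̃y + ab̃c, xb̃ - x̃b)` is the blowup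
of `Spec B` along `(x,b)`, where `B = ℤ_p[x,y,a,b,c]/(xy-p, ax+by+abc)`: formalized as
the statement that the graded `B`-algebra map `B[x̃,b̃] → B[T]` (Rees algebra),
`x̃ ↦ x·T`, `b̃ ↦ b·T`, has kernel exactly `(ax̃ + b̃y + ab̃c, xb̃ - x̃b)` and range the
Rees algebra of `(x,b)` — i.e. `S` is the Rees algebra of `(x,b)`, whose `Proj` is by
definition the blowup.  Variables of `B`: `x = X 0`, `y = X 1`, `a = X 2`, `b = X 3`,
`c = X 4`; of `B[x̃,b̃]`: `x̃ = X 0`, `b̃ = X 1`. -/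
theorem stmt19 (p : ℕ) [Fact p.Prime] (hp : Odd p) :
    letI I : Ideal (MvPolynomial (Fin 5) ℤ_[p]) :=
      Ideal.span {X 0 * X 1 - C (p : ℤ_[p]),
        X 2 * X 0 + X 3 * X 1 + X 2 * X 3 * X 4}
    letI B := MvPolynomial (Fin 5) ℤ_[p] ⧸ I
    letI π : MvPolynomial (Fin 5) ℤ_[p] →+* B := Ideal.Quotient.mk I
    letI φ : MvPolynomial (Fin 2) B →ₐ[B] Polynomial B :=
      MvPolynomial.aeval
        ![Polynomial.C (π (X 0)) * Polynomial.X,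
          Polynomial.C (π (X 3)) * Polynomial.X]
    RingHom.ker (φ : MvPolynomial (Fin 2) B →+* Polynomial B) =
      Ideal.span
        {C (π (X 2)) * X 0 + X 1 * C (π (X 1)) + C (π (X 2)) * X 1 * C (π (X 4)),
         C (π (X 0)) * X 1 - X 0 * C (π (X 3))} ∧
    φ.range = reesAlgebra (Ideal.span {π (X 0), π (X 3)}) :=
  stmt19_general p
end
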